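/- For any real α with 1/2 ≤ α < 1, the Mertens function satisfies M(x) ≪ x^α as x → ∞ if and only if g(x) ≪ x^{α-1} as x → ∞. -/

import Mathlib

/-!
Abel summation gives `g x = M x / x + ∫₁ˣ M t t⁻² dt` and `M x = x g x - ∫₁ˣ g t dt`.
The second identity turns `g x ≪ x^(α-1)` into `M x ≪ x^α`, because `α > 0`.
Conversely, if `M x ≪ x^α` with `α < 1`, then `∫₁^∞ M t t⁻² dt` converges absolutely, and it
vanishes: by dominated convergence it is the limit as `s → 1⁺` of
`∫₁^∞ M t t^(-s-1) dt = 1 / (s ζ(s))`, and `ζ` has a pole at `1`. Hence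
`g x = M x / x - ∫ₓ^∞ M t t⁻² dt ≪ x^(α-1)`.
-/

open MeasureTheory Filter Asymptotics Set

noncomputable def M (x : ℝ) : ℝ :=
  ∑ n ∈ Finset.Icc 1 ⌊x⌋₊, (ArithmeticFunction.moebius n : ℝ)

noncomputable def g (x : ℝ) : ℝ :=
  ∑ n ∈ Finset.Icc 1 ⌊x⌋₊, (ArithmeticFunction.moebius n : ℝ) / n

open Topology

theorem isBigO_integral_Ioi_of_isBigO_rpow {f : ℝ → ℝ} {q : ℝ} (hq : q < -1)
    (hf : f =O[atTop] fun t => t ^ q) :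
    (fun x => ∫ t in Ioi x, f t) =O[atTop] fun x => x ^ (q + 1) := by
  obtain ⟨C, hC⟩ := hf.bound
  obtain ⟨x₀, hx₀⟩ := eventually_atTop.mp (hC.and (eventually_gt_atTop 0))
  refine IsBigO.of_bound (C / -(q + 1)) ?_
  filter_upwards [eventually_ge_atTop x₀, eventually_gt_atTop 0] with x hx hx0
  have hbound : ∀ᵐ t ∂(volume.restrict (Ioi x)), ‖f t‖ ≤ C * t ^ q := by
    refine ae_restrict_of_forall_mem measurableSet_Ioi fun t ht => ?_
    obtain ⟨ht, ht0⟩ := hx₀ t (hx.trans (le_of_lt ht))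
    rwa [Real.norm_of_nonneg (Real.rpow_nonneg ht0.le q)] at ht
  calc ‖∫ t in Ioi x, f t‖
      ≤ ∫ t in Ioi x, C * t ^ q :=
        norm_integral_le_of_norm_le ((integrableOn_Ioi_rpow_of_lt hq hx0).const_mul C) hbound
    _ = C / -(q + 1) * ‖x ^ (q + 1)‖ := by
        rw [integral_const_mul, integral_Ioi_rpow_of_lt hq hx0,
          Real.norm_of_nonneg (Real.rpow_nonneg hx0.le _), div_neg, neg_div]
        ring

theorem isBigO_integral_Ioc_of_isBigO_rpow {f : ℝ → ℝ} {a p : ℝ} (hp : 0 < p)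
    (hf_int : LocallyIntegrableOn f (Ici a)) (hf : f =O[atTop] fun t => t ^ (p - 1)) :
    (fun x => ∫ t in Ioc a x, f t) =O[atTop] fun x => x ^ p := by
  obtain ⟨C, hC0, hC⟩ := hf.exists_pos
  obtain ⟨x₀, hx₀⟩ := eventually_atTop.mp hC.bound
  set b := max (max a x₀) 1
  have hIoc : ∀ x, IntegrableOn f (Ioc a x) := fun x =>
    (hf_int.integrableOn_compact_subset Icc_subset_Ici_self isCompact_Icc).mono_set
      Ioc_subset_Icc_self
  refine IsBigO.of_bound (‖∫ t in Ioc a b, f t‖ + C / p) ?_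
  filter_upwards [eventually_ge_atTop b] with x hx
  have hb1 : 1 ≤ b := le_max_right _ _
  have hab : a ≤ b := (le_max_left _ _).trans (le_max_left _ _)
  have hx1 : 1 ≤ x := hb1.trans hx
  have hxp : 1 ≤ x ^ p := Real.one_le_rpow hx1 hp.le
  have hsplit : ∫ t in Ioc a x, f t = (∫ t in Ioc a b, f t) + ∫ t in Ioc b x, f t := by
    rw [← Ioc_union_Ioc_eq_Ioc hab hx, setIntegral_union (Ioc_disjoint_Ioc_of_le le_rfl)
      measurableSet_Ioc (hIoc b) ((hIoc x).mono_set (Ioc_subset_Ioc_left hab))]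
  have hbound : ∀ᵐ t ∂(volume.restrict (Ioc b x)), ‖f t‖ ≤ C * t ^ (p - 1) := by
    refine ae_restrict_of_forall_mem measurableSet_Ioc fun t ht => ?_
    have hbt : b ≤ t := ht.1.le
    have := hx₀ t (((le_max_right _ _).trans (le_max_left _ _)).trans hbt)
    rwa [Real.norm_of_nonneg (Real.rpow_nonneg (by linarith) _)] at this
  have htail : ‖∫ t in Ioc b x, f t‖ ≤ C / p * x ^ p :=
    calc ‖∫ t in Ioc b x, f t‖
        ≤ ∫ t in Ioc b x, C * t ^ (p - 1) :=
          norm_integral_le_of_norm_le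
            ((intervalIntegral.intervalIntegrable_rpow' (by linarith)).1.const_mul C) hbound
      _ = C / p * (x ^ p - b ^ p) := by
          rw [integral_const_mul, ← intervalIntegral.integral_of_le hx,
            integral_rpow (Or.inl (by linarith)), sub_add_cancel]
          ring
      _ ≤ C / p * x ^ p := by
          gcongr
          exact sub_le_self _ (Real.rpow_nonneg (by linarith) _)
  rw [hsplit, Real.norm_of_nonneg (by positivity : (0:ℝ) ≤ x ^ p)]
  calc ‖(∫ t in Ioc a b, f t) + ∫ t in Ioc b x, f t‖
      ≤ ‖∫ t in Ioc a b, f t‖ * x ^ p + C / p * x ^ p := by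
        have h1 : ‖∫ t in Ioc a b, f t‖ ≤ ‖∫ t in Ioc a b, f t‖ * x ^ p :=
          le_mul_of_one_le_right (norm_nonneg _) hxp
        exact (norm_add_le _ _).trans (add_le_add h1 htail)
    _ = (‖∫ t in Ioc a b, f t‖ + C / p) * x ^ p := by ring

theorem tendsto_setIntegral_mul_rpow_neg_nhdsGT {F : ℝ → ℝ} {s₀ : ℝ} (hF_meas : Measurable F)
    (hF : IntegrableOn (fun t => F t * t ^ (-s₀)) (Ioi 1)) :
    Tendsto (fun s => ∫ t in Ioi 1, F t * t ^ (-s)) (𝓝[>] s₀)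
      (𝓝 (∫ t in Ioi 1, F t * t ^ (-s₀))) := by
  refine tendsto_integral_filter_of_dominated_convergence (fun t => ‖F t * t ^ (-s₀)‖)
    (Eventually.of_forall fun s => (hF_meas.mul (by fun_prop)).aestronglyMeasurable) ?_ hF.norm ?_
  · filter_upwards [self_mem_nhdsWithin] with s hs
    refine ae_restrict_of_forall_mem measurableSet_Ioi fun t ht => ?_
    have ht0 : (0:ℝ) < t := zero_lt_one.trans ht
    rw [norm_mul, norm_mul, Real.norm_of_nonneg (Real.rpow_nonneg ht0.le _),
      Real.norm_of_nonneg (Real.rpow_nonneg ht0.le _)]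
    gcongr
    · exact ht.le
    · exact le_of_lt hs
  · refine ae_restrict_of_forall_mem measurableSet_Ioi fun t ht => ?_
    have ht0 : (0:ℝ) < t := zero_lt_one.trans ht
    refine ((Continuous.tendsto ?_ s₀).const_mul (F t)).mono_left nhdsWithin_le_nhds
    exact (Real.continuous_const_rpow ht0.ne').comp continuous_neg

theorem Finset.sum_Icc_zero_eq_sum_Icc_one {R : Type*} [AddCommMonoid R] {c : ℕ → R}
    (hc : c 0 = 0) (n : ℕ) : ∑ k ∈ Finset.Icc 0 n, c k = ∑ k ∈ Finset.Icc 1 n, c k := by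
  rw [Finset.Icc_eq_cons_Ioc (Nat.zero_le n), Finset.sum_cons, hc, zero_add]
  rfl

theorem M_eq_sum_Icc_zero (x : ℝ) :
    M x = ∑ k ∈ Finset.Icc 0 ⌊x⌋₊, (ArithmeticFunction.moebius k : ℝ) :=
  (Finset.sum_Icc_zero_eq_sum_Icc_one (by simp) _).symm

theorem g_eq_sum_Icc_zero (x : ℝ) :
    g x = ∑ k ∈ Finset.Icc 0 ⌊x⌋₊, (ArithmeticFunction.moebius k : ℝ) / k :=
  (Finset.sum_Icc_zero_eq_sum_Icc_one (by simp) _).symm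

theorem g_eq_inv_mul_M_add_integral (x : ℝ) :
    g x = x⁻¹ * M x + ∫ t in Ioc 1 x, M t * t ^ (-2 : ℝ) := by
  have abel := sum_mul_eq_sub_integral_mul₀ (fun n => (ArithmeticFunction.moebius n : ℝ))
    (f := fun t => t⁻¹) (by simp) x
    (fun t ht => differentiableAt_inv (zero_lt_one.trans_le ht.1).ne')
    (by
      rw [deriv_inv']
      exact ContinuousOn.integrableOn_Icc
        (by fun_prop (disch := intro t ht; nlinarith [ht.1])))
  have hweight : ∫ t in Ioc 1 x, deriv (fun t : ℝ => t⁻¹) t * M t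
      = -∫ t in Ioc 1 x, M t * t ^ (-2 : ℝ) := by
    rw [← integral_neg]
    refine setIntegral_congr_fun measurableSet_Ioc fun t ht => ?_
    rw [deriv_inv, Real.rpow_neg (zero_le_one.trans ht.1.le), Real.rpow_two]
    ring
  simp only [← M_eq_sum_Icc_zero] at abel
  rw [g_eq_sum_Icc_zero, ← sub_neg_eq_add, ← hweight, ← abel]
  simp only [div_eq_inv_mul]

theorem M_eq_mul_g_sub_integral (x : ℝ) : M x = x * g x - ∫ t in Ioc 1 x, g t := by
  have abel := sum_mul_eq_sub_integral_mul₀ (fun n => (ArithmeticFunction.moebius n : ℝ) / n)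
    (f := fun t => t) (by simp) x (fun t _ => differentiableAt_id)
    (by simp)
  simp only [← g_eq_sum_Icc_zero, deriv_id'', one_mul] at abel
  rw [← abel, M_eq_sum_Icc_zero]
  refine Finset.sum_congr rfl fun k _ => ?_
  rcases eq_or_ne k 0 with rfl | hk
  · simp
  · field_simp

theorem measurable_M : Measurable M :=
  (measurable_from_nat (f := fun n => ∑ k ∈ Finset.Icc 1 n,
    (ArithmeticFunction.moebius k : ℝ))).comp Nat.measurable_floor

theorem locallyIntegrableOn_g : LocallyIntegrableOn g (Ici 1) := by
  unfold g
  simpa using locallyIntegrableOn_mul_sum_Icc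
    (fun n => (ArithmeticFunction.moebius n : ℝ) / n) (m := 1) zero_le_one
    (locallyIntegrableOn_const (1 : ℝ))

theorem integrableOn_M_mul_rpow_neg_two {α : ℝ} (hα : α < 1)
    (hM : M =O[atTop] fun x => x ^ α) :
    IntegrableOn (fun t => M t * t ^ (-2 : ℝ)) (Ioi 1) := by
  have hw : ContinuousOn (fun t : ℝ => t ^ (-2 : ℝ)) (Ici 1) :=
    continuousOn_id.rpow_const fun t ht => Or.inl (zero_lt_one.trans_le ht).ne'
  have hloc : LocallyIntegrableOn (fun t => M t * t ^ (-2 : ℝ)) (Ici 1) := by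
    simpa only [M, mul_comm] using locallyIntegrableOn_mul_sum_Icc
      (fun n => (ArithmeticFunction.moebius n : ℝ)) (m := 1) zero_le_one
      (hw.locallyIntegrableOn measurableSet_Ici)
  refine (hloc.integrableOn_of_isBigO_atTop (g := fun t => t ^ (α - 2)) ?_ ?_).mono_set
    Ioi_subset_Ici_self
  · exact hM.mul_atTop_rpow_of_isBigO_rpow _ _ (α - 2) (isBigO_refl _ _) le_rfl
  · exact integrableAtFilter_rpow_atTop_iff.mpr (by linarith)

theorem tendsto_inv_riemannZeta_nhdsNE_one :
    Tendsto (fun s => (riemannZeta s)⁻¹) (𝓝[≠] 1) (𝓝 0) := by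
  have h := (tendsto_sub_nhds_zero_iff.mpr (tendsto_nhdsWithin_of_tendsto_nhds tendsto_id)).mul
    (riemannZeta_residue_one.inv₀ one_ne_zero)
  rw [zero_mul] at h
  refine h.congr' ?_
  simp only [id]
  filter_upwards [self_mem_nhdsWithin] with s hs
  rw [mul_inv, ← mul_assoc, mul_inv_cancel₀ (sub_ne_zero.mpr hs), one_mul]

theorem ofReal_mul_integral_M_mul_rpow_eq_inv_riemannZeta {s : ℝ} (hs : 1 < s) :
    ((s * ∫ t in Ioi 1, M t * t ^ (-(s + 1)) : ℝ) : ℂ) = (riemannZeta s)⁻¹ := by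
  have hre : 1 < (s : ℂ).re := by simpa using hs
  have hL : LSeries (fun n => (ArithmeticFunction.moebius n : ℂ)) s = (riemannZeta s)⁻¹ := by
    refine eq_inv_of_mul_eq_one_right ?_
    rw [← ArithmeticFunction.LSeries_zeta_eq_riemannZeta hre]
    exact ArithmeticFunction.LSeries_zeta_mul_Lseries_moebius hre
  have hO : (fun n => ∑ k ∈ Finset.Icc 1 n, ‖(ArithmeticFunction.moebius k : ℂ)‖)
      =O[atTop] fun n => (n : ℝ) ^ (1 : ℝ) := by
    refine isBigO_of_le _ fun n => ?_
    rw [Real.rpow_one, Real.norm_natCast,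
      Real.norm_of_nonneg (Finset.sum_nonneg fun _ _ => norm_nonneg _)]
    calc ∑ k ∈ Finset.Icc 1 n, ‖(ArithmeticFunction.moebius k : ℂ)‖
        ≤ ∑ k ∈ Finset.Icc 1 n, (1 : ℝ) := Finset.sum_le_sum fun k _ => by
          rw [Complex.norm_intCast]
          exact_mod_cast ArithmeticFunction.abs_moebius_le_one
      _ = n := by simp
  rw [← hL, LSeries_eq_mul_integral' _ zero_le_one hre hO, Complex.ofReal_mul,
    ← integral_complex_ofReal]
  congr 1
  refine setIntegral_congr_fun measurableSet_Ioi fun t ht => ?_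
  rw [Complex.ofReal_mul, Complex.ofReal_cpow (zero_le_one.trans ht.le)]
  push_cast [M]
  rfl

theorem integral_M_mul_rpow_neg_two_eq_zero {α : ℝ} (hα : α < 1)
    (hM : M =O[atTop] fun x => x ^ α) :
    ∫ t in Ioi 1, M t * t ^ (-2 : ℝ) = 0 := by
  have hshift : Tendsto (fun s : ℝ => s + 1) (𝓝[>] 1) (𝓝[>] 2) := by
    refine tendsto_nhdsWithin_of_tendsto_nhds_of_eventually_within _
      (((continuous_add_const 1).tendsto' 1 2 (by norm_num)).mono_left nhdsWithin_le_nhds) ?_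
    filter_upwards [self_mem_nhdsWithin] with s (hs : 1 < s)
    exact show (2 : ℝ) < s + 1 by linarith
  have hcast : Tendsto (fun s : ℝ => (s : ℂ)) (𝓝[>] 1) (𝓝[≠] 1) := by
    refine tendsto_nhdsWithin_of_tendsto_nhds_of_eventually_within _
      ((Complex.continuous_ofReal.tendsto' 1 1 Complex.ofReal_one).mono_left
        nhdsWithin_le_nhds) ?_
    filter_upwards [self_mem_nhdsWithin] with s hs
    exact Complex.ofReal_ne_one.mpr (ne_of_gt hs)
  have hlim : Tendsto (fun s : ℝ => s * ∫ t in Ioi 1, M t * t ^ (-(s + 1))) (𝓝[>] 1)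
      (𝓝 (1 * ∫ t in Ioi 1, M t * t ^ (-2 : ℝ))) :=
    (tendsto_nhdsWithin_of_tendsto_nhds tendsto_id).mul
      ((tendsto_setIntegral_mul_rpow_neg_nhdsGT measurable_M
        (integrableOn_M_mul_rpow_neg_two hα hM)).comp hshift)
  have hzero : Tendsto (fun s : ℝ => ((s * ∫ t in Ioi 1, M t * t ^ (-(s + 1)) : ℝ) : ℂ))
      (𝓝[>] 1) (𝓝 0) := by
    refine (tendsto_inv_riemannZeta_nhdsNE_one.comp hcast).congr' ?_
    filter_upwards [self_mem_nhdsWithin] with s hs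
    exact (ofReal_mul_integral_M_mul_rpow_eq_inv_riemannZeta hs).symm
  simpa using tendsto_nhds_unique ((Complex.continuous_ofReal.tendsto _).comp hlim) hzero

theorem isBigO_g_of_isBigO_M {α : ℝ} (hα : α < 1) (hM : M =O[atTop] fun x => x ^ α) :
    g =O[atTop] fun x => x ^ (α - 1) := by
  have hM_int := integrableOn_M_mul_rpow_neg_two hα hM
  have hg : (fun x => x⁻¹ * M x - ∫ t in Ioi x, M t * t ^ (-2 : ℝ)) =ᶠ[atTop] g := by
    filter_upwards [eventually_ge_atTop 1] with x hx
    have hsplit := setIntegral_union (Ioc_disjoint_Ioi le_rfl) measurableSet_Ioi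
      (hM_int.mono_set Ioc_subset_Ioi_self) (hM_int.mono_set (Ioi_subset_Ioi hx))
    rw [Ioc_union_Ioi_eq_Ioi hx, integral_M_mul_rpow_neg_two_eq_zero hα hM] at hsplit
    rw [g_eq_inv_mul_M_add_integral]
    linarith
  have hinv : (fun x : ℝ => x⁻¹) =O[atTop] fun x => x ^ (-1 : ℝ) := by
    simp_rw [Real.rpow_neg_one]
    exact isBigO_refl _ _
  have htail := isBigO_integral_Ioi_of_isBigO_rpow (q := α - 2) (by linarith)
    (hM.mul_atTop_rpow_of_isBigO_rpow _ _ _ (isBigO_refl (fun t : ℝ => t ^ (-2 : ℝ)) _) le_rfl)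
  rw [show α - 2 + 1 = α - 1 by ring] at htail
  exact ((hinv.mul_atTop_rpow_of_isBigO_rpow _ _ _ hM (by linarith)).sub htail).congr' hg
    EventuallyEq.rfl

theorem isBigO_M_of_isBigO_g {α : ℝ} (hα : 0 < α) (hg : g =O[atTop] fun x => x ^ (α - 1)) :
    M =O[atTop] fun x => x ^ α := by
  have hid : (fun x : ℝ => x) =O[atTop] fun x => x ^ (1 : ℝ) := by
    simp_rw [Real.rpow_one]
    exact isBigO_refl _ _
  rw [show M = fun x => x * g x - ∫ t in Ioc 1 x, g t from funext M_eq_mul_g_sub_integral]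
  exact (hid.mul_atTop_rpow_of_isBigO_rpow _ _ _ hg (by linarith)).sub
    (isBigO_integral_Ioc_of_isBigO_rpow hα locallyIntegrableOn_g hg)

theorem mertens_bigO_iff (α : ℝ) (hα₁ : 1/2 ≤ α) (hα₂ : α < 1) :
    (M =O[atTop] fun x : ℝ => x ^ α) ↔ (g =O[atTop] fun x : ℝ => x ^ (α - 1)) :=
  ⟨isBigO_g_of_isBigO_M hα₂, isBigO_M_of_isBigO_g (by linarith)⟩
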